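/- Let f_n: X → X be continuous maps on a metric space (X,d). If the non-autonomous system x_{n+1} = f_n(x_n) has an uncountable Xiong-chaotic set S with respect to an increasing sequence P ⊂ ℕ, then there exists an increasing subsequence T of P such that S is an uncountable distributionally scrambled set in the sequence T; i.e., the system is distributionally chaotic in a subsequence of P. -/

import Mathlib

open Filter Metric Set
open scoped Classical


/-- Trajectory of the non-autonomous system: `orb f n = f_{n-1} ∘ ⋯ ∘ f_0`, `orb f 0 = id`. -/
def orb {X : Type*} (f : ℕ → X → X) : ℕ → X → X
  | 0 => id
  | n + 1 => fun x => f n (orb f n x)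

/-- Cesàro average of the indicator of `dist (f_0^{p i} x) (f_0^{p i} y) < ε` over `i < n`. -/
noncomputable def distAvg {X : Type*} [MetricSpace X] (f : ℕ → X → X) (p : ℕ → ℕ)
    (x y : X) (ε : ℝ) (n : ℕ) : ℝ :=
  (∑ i ∈ Finset.range n, if dist (orb f (p i) x) (orb f (p i) y) < ε then (1 : ℝ) else 0) / n

namespace Stmt15Aux

/-- Block endpoints: `Nseq (j+1)` is much bigger than `Nseq j`. -/
def Nseq : ℕ → ℕ
  | 0 => 0
  | j + 1 => (Nseq j + 1) * (j + 2)

lemma Nseq_succ (j : ℕ) : Nseq (j + 1) = (Nseq j + 1) * (j + 2) := rfl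

lemma Nseq_lt_succ (j : ℕ) : Nseq j < Nseq (j + 1) := by
  rw [Nseq_succ]; nlinarith [Nat.zero_le (Nseq j)]

lemma Nseq_mono : StrictMono Nseq := strictMono_nat_of_lt_succ Nseq_lt_succ

lemma le_Nseq_succ (j : ℕ) : j + 2 ≤ Nseq (j + 1) := by
  rw [Nseq_succ]; nlinarith [Nat.zero_le (Nseq j)]

lemma le_Nseq (j : ℕ) : j ≤ Nseq j := by
  cases j with
  | zero => simp [Nseq]
  | succ j => have := le_Nseq_succ j; omega

lemma Nseq_ratio (K j : ℕ) : (K + Nseq j) * (j + 2) ≤ (K + 1) * Nseq (j + 1) := by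
  rw [Nseq_succ, ← mul_assoc]
  have h : K + Nseq j ≤ (K + 1) * (Nseq j + 1) := by nlinarith [Nat.zero_le (K * Nseq j)]
  exact Nat.mul_le_mul_right _ h

/-- The index of the block containing `n`. -/
def blk (n : ℕ) : ℕ := Nat.findGreatest (fun j => Nseq j ≤ n) n

lemma Nseq_blk_le (n : ℕ) : Nseq (blk n) ≤ n :=
  Nat.findGreatest_spec (P := fun j => Nseq j ≤ n) (Nat.zero_le n) (Nat.zero_le n)

lemma lt_Nseq_blk_succ (n : ℕ) : n < Nseq (blk n + 1) := by
  by_contra h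
  push_neg at h
  have h2 : blk n + 1 ≤ n := le_trans (le_Nseq _) h
  exact Nat.findGreatest_is_greatest (Nat.lt_succ_self _) h2 h

lemma blk_eq {j n : ℕ} (h1 : Nseq j ≤ n) (h2 : n < Nseq (j + 1)) : blk n = j := by
  have a := Nseq_blk_le n
  have b := lt_Nseq_blk_succ n
  rcases lt_trichotomy (blk n) j with h | h | h
  · exfalso; have := Nseq_mono.monotone (show blk n + 1 ≤ j by omega); omega
  · exact h
  · exfalso; have := Nseq_mono.monotone (show j + 1 ≤ blk n by omega); omega

lemma lt_of_even_blk {i t : ℕ} (hi : i < Nseq (2 * t + 2)) (he : Even (blk i)) :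
    i < Nseq (2 * t + 1) := by
  have a := Nseq_blk_le i
  have b := lt_Nseq_blk_succ i
  have h1 : blk i < 2 * t + 2 := by
    by_contra h; push_neg at h; have := Nseq_mono.monotone h; omega
  have h2 : blk i ≤ 2 * t := by obtain ⟨k, hk⟩ := he; omega
  have := Nseq_mono.monotone (show blk i + 1 ≤ 2 * t + 1 by omega); omega

section interleave
variable (g₀ g₁ : ℕ → ℕ)

/-- In even blocks use `g₁`, in odd blocks use `g₀`. -/
def pick (n k : ℕ) : ℕ := if Even (blk n) then g₁ k else g₀ k

/-- Index sequence fed to the generators. -/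
def cm : ℕ → ℕ
  | 0 => 0
  | n + 1 => pick g₀ g₁ n (cm n) + 1

/-- The interleaved subsequence. -/
def mm (n : ℕ) : ℕ := pick g₀ g₁ n (cm g₀ g₁ n)

variable {g₀ g₁}

lemma le_pick (h₀ : StrictMono g₀) (h₁ : StrictMono g₁) (n k : ℕ) : k ≤ pick g₀ g₁ n k := by
  unfold pick; split
  · exact h₁.le_apply
  · exact h₀.le_apply

lemma mm_strictMono (h₀ : StrictMono g₀) (h₁ : StrictMono g₁) : StrictMono (mm g₀ g₁) := by
  apply strictMono_nat_of_lt_succ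
  intro n
  have h1 : cm g₀ g₁ (n + 1) = mm g₀ g₁ n + 1 := rfl
  calc mm g₀ g₁ n < cm g₀ g₁ (n + 1) := by omega
    _ ≤ mm g₀ g₁ (n + 1) := le_pick h₀ h₁ _ _

lemma le_cm (h₀ : StrictMono g₀) (h₁ : StrictMono g₁) (n : ℕ) : n ≤ cm g₀ g₁ n := by
  induction n with
  | zero => exact Nat.zero_le _
  | succ n ih =>
      have h1 : cm g₀ g₁ (n + 1) = pick g₀ g₁ n (cm g₀ g₁ n) + 1 := rfl
      have := le_pick h₀ h₁ n (cm g₀ g₁ n)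
      omega

lemma mm_even {n : ℕ} (h : Even (blk n)) : mm g₀ g₁ n = g₁ (cm g₀ g₁ n) := by
  unfold mm pick; rw [if_pos h]

lemma mm_odd {n : ℕ} (h : ¬ Even (blk n)) : mm g₀ g₁ n = g₀ (cm g₀ g₁ n) := by
  unfold mm pick; rw [if_neg h]

end interleave

/-- Lower bound on the indicator sum at the end of an even block. -/
lemma sum_lower {K : ℕ} {ind : ℕ → ℝ} (h0 : ∀ i, 0 ≤ ind i)
    (hev : ∀ i, K ≤ i → Even (blk i) → ind i = 1) (t : ℕ) :
    (Nseq (2 * t + 1) : ℝ) - K - Nseq (2 * t) ≤ ∑ i ∈ Finset.range (Nseq (2 * t + 1)), ind i := by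
  set n := Nseq (2 * t + 1) with hn
  set a := max K (Nseq (2 * t)) with ha
  have hsub : Finset.Ico a n ⊆ Finset.range n := by
    intro i hi; rw [Finset.mem_Ico] at hi; rw [Finset.mem_range]; omega
  have h1 : ∀ i ∈ Finset.Ico a n, ind i = 1 := by
    intro i hi; rw [Finset.mem_Ico] at hi
    have hblk : blk i = 2 * t := blk_eq (le_trans (le_max_right _ _) hi.1) hi.2
    exact hev i (le_trans (le_max_left _ _) hi.1) (by rw [hblk]; exact even_two_mul t)
  have h2 : ((Finset.Ico a n).card : ℝ) ≤ ∑ i ∈ Finset.range n, ind i := by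
    calc ((Finset.Ico a n).card : ℝ) = ∑ i ∈ Finset.Ico a n, ind i := by
          rw [Finset.sum_congr rfl h1]; simp
      _ ≤ ∑ i ∈ Finset.range n, ind i :=
          Finset.sum_le_sum_of_subset_of_nonneg hsub (fun i _ _ => h0 i)
  have h3 : (n : ℝ) - K - Nseq (2 * t) ≤ ((Finset.Ico a n).card : ℝ) := by
    rw [Nat.card_Ico]
    rcases le_or_gt a n with h | h
    · rw [Nat.cast_sub h]
      have : (a : ℝ) ≤ (K : ℝ) + Nseq (2 * t) := by
        have : a ≤ K + Nseq (2 * t) := by omega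
        exact_mod_cast this
      linarith
    · have h4 : n - a = 0 := by omega
      have h5 : (n : ℝ) < (K : ℝ) + Nseq (2 * t) := by
        have : n < K + Nseq (2 * t) := by omega
        exact_mod_cast this
      rw [h4]; simp; linarith
  linarith

/-- Upper bound on the indicator sum at the end of an odd block. -/
lemma sum_upper {K : ℕ} {ind : ℕ → ℝ} (h1 : ∀ i, ind i ≤ 1)
    (hev : ∀ i, K ≤ i → ¬ Even (blk i) → ind i = 0) (t : ℕ) :
    ∑ i ∈ Finset.range (Nseq (2 * t + 2)), ind i ≤ (K : ℝ) + Nseq (2 * t + 1) := by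
  set n := Nseq (2 * t + 2) with hn
  set M := K + Nseq (2 * t + 1) with hM
  have key : ∀ i ∈ Finset.range n, ind i ≤ if i < M then (1 : ℝ) else 0 := by
    intro i hi; rw [Finset.mem_range] at hi
    by_cases hMi : i < M
    · rw [if_pos hMi]; exact h1 i
    · rw [if_neg hMi]; push_neg at hMi
      have hK : K ≤ i := by omega
      have hge : Nseq (2 * t + 1) ≤ i := by omega
      have hblk : blk i = 2 * t + 1 := blk_eq hge hi
      have hodd : ¬ Even (blk i) := by
        rw [hblk]; intro h; obtain ⟨k, hk⟩ := h; omega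
      exact le_of_eq (hev i hK hodd)
  calc ∑ i ∈ Finset.range n, ind i ≤ ∑ i ∈ Finset.range n, (if i < M then (1 : ℝ) else 0) :=
        Finset.sum_le_sum key
    _ = (((Finset.range n).filter (· < M)).card : ℝ) := by rw [Finset.sum_boole]
    _ ≤ (M : ℝ) := by
        have hsub : (Finset.range n).filter (· < M) ⊆ Finset.range M := by
          intro i hi; simp only [Finset.mem_filter, Finset.mem_range] at *; exact hi.2
        have := Finset.card_le_card hsub
        rw [Finset.card_range] at this
        exact_mod_cast this
    _ = (K : ℝ) + Nseq (2 * t + 1) := by push_cast [hM]; ring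

end Stmt15Aux

theorem stmt15 {X : Type*} [MetricSpace X] (f : ℕ → X → X) (hf : ∀ n, Continuous (f n))
    (p : ℕ → ℕ) (hp : StrictMono p) (S : Set X) (hS : ¬ S.Countable)
    (hXiong : ∀ F : S → X, Continuous F → ∃ m : ℕ → ℕ, StrictMono m ∧
      ∀ x : S, Tendsto (fun k => orb f (p (m k)) (x : X)) atTop (nhds (F x))) :
    ∃ m : ℕ → ℕ, StrictMono m ∧
      ∀ x ∈ S, ∀ y ∈ S, x ≠ y →
        (∀ ε > 0, limsup (distAvg f (p ∘ m) x y ε) atTop = 1) ∧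
        ∃ δ > 0, liminf (distAvg f (p ∘ m) x y δ) atTop = 0 := by
  classical
  have hSne : S.Nonempty := by
    rcases S.eq_empty_or_nonempty with h | h
    · exact absurd (h ▸ Set.countable_empty) hS
    · exact h
  obtain ⟨c, hc⟩ := hSne
  obtain ⟨g₀, hg₀mono, hg₀⟩ := hXiong (fun z => (z : X)) continuous_subtype_val
  obtain ⟨g₁, hg₁mono, hg₁⟩ := hXiong (fun _ => c) continuous_const
  refine ⟨Stmt15Aux.mm g₀ g₁, Stmt15Aux.mm_strictMono hg₀mono hg₁mono, ?_⟩
  intro x hx y hy hxy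
  set m := Stmt15Aux.mm g₀ g₁ with hm
  have hb0 : ∀ (ε : ℝ) (n : ℕ), 0 ≤ distAvg f (p ∘ m) x y ε n := by
    intro ε n
    apply div_nonneg _ (Nat.cast_nonneg n)
    apply Finset.sum_nonneg
    intro i _
    split <;> norm_num
  have hb1 : ∀ (ε : ℝ) (n : ℕ), distAvg f (p ∘ m) x y ε n ≤ 1 := by
    intro ε n
    rcases Nat.eq_zero_or_pos n with rfl | hn
    · simp [distAvg]
    · rw [distAvg, div_le_one (by exact_mod_cast hn)]
      calc (∑ i ∈ Finset.range n,
              if dist (orb f ((p ∘ m) i) x) (orb f ((p ∘ m) i) y) < ε then (1:ℝ) else 0)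
            ≤ ∑ i ∈ Finset.range n, (1:ℝ) :=
              Finset.sum_le_sum (fun i _ => by split <;> norm_num)
        _ = n := by simp
  have hclose : Tendsto (fun k => dist (orb f (p (g₁ k)) x) (orb f (p (g₁ k)) y)) atTop (nhds 0) := by
    have h1 := hg₁ ⟨x, hx⟩
    have h2 := hg₁ ⟨y, hy⟩
    simpa using h1.dist h2
  have hfar : Tendsto (fun k => dist (orb f (p (g₀ k)) x) (orb f (p (g₀ k)) y)) atTop
      (nhds (dist x y)) := (hg₀ ⟨x, hx⟩).dist (hg₀ ⟨y, hy⟩)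
  have humono1 : StrictMono (fun t : ℕ => Stmt15Aux.Nseq (2 * t + 1)) :=
    Stmt15Aux.Nseq_mono.comp (fun a b h => by omega)
  have humono2 : StrictMono (fun t : ℕ => Stmt15Aux.Nseq (2 * t + 2)) :=
    Stmt15Aux.Nseq_mono.comp (fun a b h => by omega)
  have hfreq : ∀ (u : ℕ → ℕ), StrictMono u → ∀ {P : ℕ → Prop},
      (∀ᶠ t in atTop, P (u t)) → ∃ᶠ n in atTop, P n := by
    intro u hu P h
    have hmap : ∀ᶠ n in map u atTop, P n := eventually_map.mpr h
    exact hmap.frequently.filter_mono hu.tendsto_atTop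
  constructor
  · -- limsup = 1 for each ε > 0
    intro ε hε
    obtain ⟨K, hK⟩ : ∃ K, ∀ k ≥ K, dist (orb f (p (g₁ k)) x) (orb f (p (g₁ k)) y) < ε :=
      eventually_atTop.mp (hclose.eventually (eventually_lt_nhds hε))
    have hev : ∀ i, K ≤ i → Even (Stmt15Aux.blk i) →
        (if dist (orb f ((p ∘ m) i) x) (orb f ((p ∘ m) i) y) < ε then (1:ℝ) else 0) = 1 := by
      intro i hKi hEv
      rw [if_pos]
      show dist (orb f (p (m i)) x) (orb f (p (m i)) y) < ε
      rw [hm, Stmt15Aux.mm_even hEv]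
      exact hK _ (le_trans hKi (Stmt15Aux.le_cm hg₀mono hg₁mono i))
    have hlow : ∀ t : ℕ, 1 - ((K:ℝ)+1)/(2*t+2) ≤
        distAvg f (p ∘ m) x y ε (Stmt15Aux.Nseq (2*t+1)) := by
      intro t
      set n := Stmt15Aux.Nseq (2*t+1) with hn
      have hnpos : (0:ℝ) < n := by
        have h2 : 2*t+2 ≤ n := Stmt15Aux.le_Nseq_succ (2*t)
        exact_mod_cast Nat.lt_of_lt_of_le (by omega) h2
      have hsum := Stmt15Aux.sum_lower (K := K)
        (ind := fun i => if dist (orb f ((p ∘ m) i) x) (orb f ((p ∘ m) i) y) < ε then (1:ℝ) else 0)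
        (fun i => by split <;> norm_num) hev t
      have hratio : ((K:ℝ) + Stmt15Aux.Nseq (2*t)) / n ≤ ((K:ℝ)+1)/(2*t+2) := by
        rw [div_le_div_iff₀ hnpos (by positivity)]
        have h := Stmt15Aux.Nseq_ratio K (2*t)
        calc ((K:ℝ) + Stmt15Aux.Nseq (2*t)) * (2*(t:ℝ)+2)
              = (((K + Stmt15Aux.Nseq (2*t)) * (2*t+2) : ℕ) : ℝ) := by push_cast; ring
          _ ≤ (((K+1) * Stmt15Aux.Nseq (2*t+1) : ℕ) : ℝ) := by exact_mod_cast h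
          _ = ((K:ℝ)+1) * n := by push_cast; ring
      have havg : ((n:ℝ) - K - Stmt15Aux.Nseq (2*t)) / n ≤ distAvg f (p ∘ m) x y ε n := by
        rw [distAvg]
        gcongr
      have heq : ((n:ℝ) - K - Stmt15Aux.Nseq (2*t)) / n
          = 1 - ((K:ℝ) + Stmt15Aux.Nseq (2*t)) / n := by
        field_simp
        ring
      rw [heq] at havg
      linarith
    have hdiv : Tendsto (fun t : ℕ => ((K:ℝ)+1)/(2*t+2)) atTop (nhds 0) := by
      apply Tendsto.div_atTop tendsto_const_nhds
      apply tendsto_atTop_add_const_right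
      exact (tendsto_natCast_atTop_atTop (R := ℝ)).const_mul_atTop two_pos
    have hlim : Tendsto (fun t : ℕ => distAvg f (p ∘ m) x y ε (Stmt15Aux.Nseq (2*t+1)))
        atTop (nhds 1) := by
      apply tendsto_of_tendsto_of_tendsto_of_le_of_le
        (g := fun t : ℕ => 1 - ((K:ℝ)+1)/(2*t+2)) (h := fun _ => (1:ℝ))
      · simpa using tendsto_const_nhds.sub hdiv
      · exact tendsto_const_nhds
      · exact hlow
      · exact fun t => hb1 ε _
    apply le_antisymm
    · apply limsup_le_of_le
      · exact (isBoundedUnder_of ⟨0, fun n => hb0 ε n⟩ :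
          IsBoundedUnder (· ≥ ·) atTop _).isCoboundedUnder_le
      · exact Eventually.of_forall (hb1 ε)
    · by_contra hcon
      push_neg at hcon
      obtain ⟨r, hr1, hr2⟩ := exists_between hcon
      have hev2 : ∀ᶠ t in atTop, r ≤ distAvg f (p ∘ m) x y ε (Stmt15Aux.Nseq (2*t+1)) :=
        hlim.eventually (eventually_ge_nhds hr2)
      have hfr : ∃ᶠ n in atTop, r ≤ distAvg f (p ∘ m) x y ε n := hfreq _ humono1 hev2
      have h3 := le_limsup_of_frequently_le hfr (isBoundedUnder_of ⟨1, hb1 ε⟩)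
      linarith
  · -- liminf = 0 for δ = dist x y / 2
    have hdpos : 0 < dist x y := dist_pos.mpr hxy
    refine ⟨dist x y / 2, by linarith, ?_⟩
    set δ := dist x y / 2 with hδ
    obtain ⟨K, hK⟩ : ∃ K, ∀ k ≥ K, δ < dist (orb f (p (g₀ k)) x) (orb f (p (g₀ k)) y) :=
      eventually_atTop.mp (hfar.eventually (eventually_gt_nhds (by rw [hδ]; linarith)))
    have hev : ∀ i, K ≤ i → ¬ Even (Stmt15Aux.blk i) →
        (if dist (orb f ((p ∘ m) i) x) (orb f ((p ∘ m) i) y) < δ then (1:ℝ) else 0) = 0 := by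
      intro i hKi hOdd
      rw [if_neg]
      show ¬ dist (orb f (p (m i)) x) (orb f (p (m i)) y) < δ
      rw [hm, Stmt15Aux.mm_odd hOdd]
      exact not_lt.mpr (le_of_lt (hK _ (le_trans hKi (Stmt15Aux.le_cm hg₀mono hg₁mono i))))
    have hupp : ∀ t : ℕ, distAvg f (p ∘ m) x y δ (Stmt15Aux.Nseq (2*t+2)) ≤ ((K:ℝ)+1)/(2*t+3) := by
      intro t
      set n := Stmt15Aux.Nseq (2*t+2) with hn
      have hnpos : (0:ℝ) < n := by
        have h2 : 2*t+3 ≤ n := Stmt15Aux.le_Nseq_succ (2*t+1)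
        exact_mod_cast Nat.lt_of_lt_of_le (by omega) h2
      have hsum := Stmt15Aux.sum_upper (K := K)
        (ind := fun i => if dist (orb f ((p ∘ m) i) x) (orb f ((p ∘ m) i) y) < δ then (1:ℝ) else 0)
        (fun i => by split <;> norm_num) hev t
      have h1 : distAvg f (p ∘ m) x y δ n ≤ ((K:ℝ) + Stmt15Aux.Nseq (2*t+1)) / n := by
        rw [distAvg]
        gcongr
      have hratio : ((K:ℝ) + Stmt15Aux.Nseq (2*t+1)) / n ≤ ((K:ℝ)+1)/(2*t+3) := by
        rw [div_le_div_iff₀ hnpos (by positivity)]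
        have h := Stmt15Aux.Nseq_ratio K (2*t+1)
        calc ((K:ℝ) + Stmt15Aux.Nseq (2*t+1)) * (2*(t:ℝ)+3)
              = (((K + Stmt15Aux.Nseq (2*t+1)) * (2*t+1+2) : ℕ) : ℝ) := by push_cast; ring
          _ ≤ (((K+1) * Stmt15Aux.Nseq (2*t+1+1) : ℕ) : ℝ) := by exact_mod_cast h
          _ = ((K:ℝ)+1) * n := by rw [hn]; push_cast; ring_nf
      linarith
    have hlim : Tendsto (fun t : ℕ => distAvg f (p ∘ m) x y δ (Stmt15Aux.Nseq (2*t+2)))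
        atTop (nhds 0) := by
      have hdiv : Tendsto (fun t : ℕ => ((K:ℝ)+1)/(2*t+3)) atTop (nhds 0) := by
        apply Tendsto.div_atTop tendsto_const_nhds
        apply tendsto_atTop_add_const_right
        exact (tendsto_natCast_atTop_atTop (R := ℝ)).const_mul_atTop two_pos
      apply tendsto_of_tendsto_of_tendsto_of_le_of_le
        (g := fun _ => (0:ℝ)) (h := fun t : ℕ => ((K:ℝ)+1)/(2*t+3))
      · exact tendsto_const_nhds
      · exact hdiv
      · exact fun t => hb0 δ _
      · exact hupp
    apply le_antisymm
    · by_contra hcon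
      push_neg at hcon
      obtain ⟨r, hr1, hr2⟩ := exists_between hcon
      have hev2 : ∀ᶠ t in atTop, distAvg f (p ∘ m) x y δ (Stmt15Aux.Nseq (2*t+2)) ≤ r :=
        hlim.eventually (eventually_le_nhds hr1)
      have hfr : ∃ᶠ n in atTop, distAvg f (p ∘ m) x y δ n ≤ r := hfreq _ humono2 hev2
      have h3 := liminf_le_of_frequently_le hfr (isBoundedUnder_of ⟨0, hb0 δ⟩)
      linarith
    · apply le_liminf_of_le
      · exact (isBoundedUnder_of ⟨1, hb1 δ⟩ :
          IsBoundedUnder (· ≤ ·) atTop _).isCoboundedUnder_ge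
      · exact Eventually.of_forall (hb0 δ)
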